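/- arXiv:1610.01981 — 2 statements merged into one kernel-verified Lean document; each statement's English description precedes it below -/
import Mathlib

section
/- Let a, b, c be integers with 0 ≤ a, b < c, c ≥ 1, and let d = (1−a−b) mod c. Then the tetrahedron T_{a,b,c} is clean (contains no point of ℤ³ on its boundary other than its four vertices) if and only if gcd(a,c) = gcd(b,c) = gcd(d,c) = 1. -/
/-- A point of `ℝ³` is a lattice point if all of its coordinates are integers. -/
def IsLatticePt (x : Fin 3 → ℝ) : Prop := ∀ i, ∃ m : ℤ, x i = (m : ℝ)

/-- The tetrahedron `T_{a,b,c}`: the convex hull of `(0,0,0)`, `(1,0,0)`, `(0,1,0)`, `(a,b,c)`. -/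
def Tet (a b c : ℤ) : Set (Fin 3 → ℝ) :=
  convexHull ℝ {![0,0,0], ![1,0,0], ![0,1,0], ![(a : ℝ), (b : ℝ), (c : ℝ)]}

/-- `T_{a,b,c}` is an empty lattice tetrahedron: it contains no point of `ℤ³`
other than its four vertices. -/
def TetIsEmpty (a b c : ℤ) : Prop :=
  ∀ x ∈ Tet a b c, IsLatticePt x →
    x = ![0,0,0] ∨ x = ![1,0,0] ∨ x = ![0,1,0] ∨ x = ![(a : ℝ), (b : ℝ), (c : ℝ)]

/-- `T_{a,b,c}` is a clean lattice tetrahedron: it contains no point of `ℤ³` on its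
boundary other than its four vertices. -/
def TetIsClean (a b c : ℤ) : Prop :=
  ∀ x ∈ frontier (Tet a b c), IsLatticePt x →
    x = ![0,0,0] ∨ x = ![1,0,0] ∨ x = ![0,1,0] ∨ x = ![(a : ℝ), (b : ℝ), (c : ℝ)]

/-!
The barycentric coordinates of a point `(m, n, k)` of `ℤ³` with respect to the vertices of
`T_{a,b,c}` are `c⁻¹` times the integers `c (1 - m - n) - (1 - a - b) k`, `c m - a k`, `c n - b k`
and `k`, and the point lies on the boundary when one of them vanishes. If `c ∣ k`, all four
coordinates are integers, which for a point of a simplex forces it to be a vertex; as the vertices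
have height `0` or `c`, the tetrahedron is clean iff `c ∣ k` for every lattice point on its
boundary. On the facet `c m = a k` this holds when `gcd(a, c) = 1`; when `g = gcd(a, c) > 1`, the
point of height `c / g` with `m = a / g` and `n = ⌈b / g⌉` lies on that facet. The facets
`c n = b k` and `c (1 - m - n) = (1 - a - b) k` are the same up to rotating `(a, b, 1 - a - b)`,
and `d ≡ 1 - a - b [ZMOD c]`.
-/

open Set

theorem AffineBasis.frontier_convexHull {ι E : Type*} [Finite ι] [NormedAddCommGroup E]
    [NormedSpace ℝ E] (b : AffineBasis ι ℝ E) :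
    frontier (convexHull ℝ (range b)) = {x | (∀ i, 0 ≤ b.coord i x) ∧ ∃ i, b.coord i x = 0} := by
  rw [frontier, ((finite_range b).isCompact_convexHull ℝ).isClosed.closure_eq,
    b.interior_convexHull, b.convexHull_eq_nonneg_coord]
  ext x
  simp only [mem_sdiff, mem_ofPred_eq, not_forall, not_lt, and_congr_right_iff]
  exact fun hx => exists_congr fun i => (hx i).ge_iff_eq'

theorem AffineBasis.exists_eq_of_coord_mem_range_intCast {ι P V : Type*} [Fintype ι]
    [AddCommGroup V] [Module ℝ V] [AddTorsor V P] (b : AffineBasis ι ℝ P) {x : P}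
    (hx : ∀ i, 0 ≤ b.coord i x) (hint : ∀ i, b.coord i x ∈ range ((↑) : ℤ → ℝ)) :
    ∃ i, x = b i := by
  obtain ⟨i, -, hi⟩ := Finset.exists_ne_zero_of_sum_ne_zero
    (f := fun i => b.coord i x) (by rw [b.sum_coord_apply_eq_one]; exact one_ne_zero)
  have hone : 1 ≤ b.coord i x := by
    obtain ⟨z, hz⟩ := hint i
    have hz0 : z ≠ 0 := by exact_mod_cast hz ▸ hi
    have hz1 : 0 ≤ z := by exact_mod_cast hz ▸ hx i
    exact hz ▸ (by exact_mod_cast (show (1 : ℤ) ≤ z by omega))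
  have hzero : ∀ j, j ≠ i → b.coord j x = 0 := fun j hj => by
    have := Finset.add_le_sum (fun j _ => hx j) (Finset.mem_univ i) (Finset.mem_univ j) hj.symm
    rw [b.sum_coord_apply_eq_one] at this
    linarith [hx j]
  refine ⟨i, b.ext_elem fun j => ?_⟩
  rcases eq_or_ne j i with rfl | hj
  · rw [b.coord_apply_eq, ← b.sum_coord_apply_eq_one x, Finset.sum_eq_single j (fun k _ => hzero k)
      (by simp)]
  · rw [hzero j hj, b.coord_apply_ne hj]

theorem exists_intermediate_point_of_gcd_ne_one {α β γ c : ℤ} (hsum : α + β + γ = 1) (hc : 0 < c)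
    (hg : Int.gcd α c ≠ 1) :
    ∃ u v w k : ℤ, u + v + w = 1 ∧ 0 < k ∧ k < c ∧
      c * u = α * k ∧ β * k ≤ c * v ∧ γ * k ≤ c * w := by
  set g : ℤ := (Int.gcd α c : ℤ)
  have hg2 : 2 ≤ g := by
    have : Int.gcd α c ≠ 0 := fun h => hc.ne' (Int.gcd_eq_zero_iff.mp h).2
    omega
  obtain ⟨k, hk⟩ : g ∣ c := Int.gcd_dvd_right α c
  obtain ⟨u, hu⟩ : g ∣ α := Int.gcd_dvd_left α c
  have hk0 : 0 < k := pos_of_mul_pos_right (hk ▸ hc) (by omega)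
  obtain ⟨v, hv_ge, hv_le⟩ : ∃ v, β ≤ g * v ∧ g * v ≤ β + g - 1 := by
    refine ⟨(β + g - 1) / g, ?_, ?_⟩ <;>
      linarith [Int.emod_nonneg (β + g - 1) (by omega : g ≠ 0),
        Int.emod_lt_of_pos (β + g - 1) (by omega : 0 < g), Int.mul_ediv_add_emod (β + g - 1) g]
  refine ⟨u, v, 1 - u - v, k, by ring, hk0, by nlinarith, by rw [hk, hu]; ring, ?_, ?_⟩
  · calc β * k ≤ g * v * k := mul_le_mul_of_nonneg_right hv_ge hk0.le
      _ = c * v := by rw [hk]; ring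
  · calc γ * k ≤ g * (1 - u - v) * k := mul_le_mul_of_nonneg_right (by linarith) hk0.le
      _ = c * (1 - u - v) := by rw [hk]; ring

theorem isLatticePt_iff {x : Fin 3 → ℝ} : IsLatticePt x ↔ ∃ m n k : ℤ, x = ![(m : ℝ), n, k] := by
  constructor
  · intro hx
    obtain ⟨m, hm⟩ := hx 0
    obtain ⟨n, hn⟩ := hx 1
    obtain ⟨k, hk⟩ := hx 2
    exact ⟨m, n, k, by ext j; fin_cases j <;> simp [hm, hn, hk]⟩
  · rintro ⟨m, n, k, rfl⟩ j
    fin_cases j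
    exacts [⟨m, rfl⟩, ⟨n, rfl⟩, ⟨k, rfl⟩]

def tetVertex (a b c : ℤ) : Fin 4 → Fin 3 → ℝ :=
  ![![0, 0, 0], ![1, 0, 0], ![0, 1, 0], ![(a : ℝ), (b : ℝ), (c : ℝ)]]

noncomputable def tetCoord (a b c : ℤ) (x : Fin 3 → ℝ) : Fin 4 → ℝ :=
  ![1 - x 0 - x 1 + (a + b - 1) * x 2 / c, x 0 - a * x 2 / c, x 1 - b * x 2 / c, x 2 / c]

def tetCoordNum (a b c m n k : ℤ) : Fin 4 → ℤ :=
  ![c * (1 - m - n) - (1 - a - b) * k, c * m - a * k, c * n - b * k, k]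

section

variable {a b c : ℤ}

theorem sum_tetCoord (x : Fin 3 → ℝ) : ∑ i, tetCoord a b c x i = 1 := by
  simp only [tetCoord, Fin.sum_univ_four, Matrix.cons_val]
  ring

theorem sum_tetCoord_smul_tetVertex (hc : c ≠ 0) (x : Fin 3 → ℝ) :
    ∑ i, tetCoord a b c x i • tetVertex a b c i = x := by
  have hc : (c : ℝ) ≠ 0 := by exact_mod_cast hc
  ext j
  fin_cases j <;> simp [tetCoord, tetVertex, Fin.sum_univ_four] <;> field_simp <;> ring

theorem tetCoord_sum_smul_tetVertex (hc : c ≠ 0) {w : Fin 4 → ℝ} (hw : ∑ i, w i = 1) :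
    tetCoord a b c (∑ i, w i • tetVertex a b c i) = w := by
  have hc : (c : ℝ) ≠ 0 := by exact_mod_cast hc
  rw [Fin.sum_univ_four] at hw
  ext j
  fin_cases j <;> simp [tetCoord, tetVertex, Fin.sum_univ_four] <;> field_simp <;> linarith

theorem affineIndependent_tetVertex (hc : c ≠ 0) : AffineIndependent ℝ (tetVertex a b c) := by
  rw [affineIndependent_iff_eq_of_fintype_affineCombination_eq]
  intro w₁ w₂ hw₁ hw₂ h
  rw [Finset.affineCombination_eq_linear_combination _ _ _ hw₁,
    Finset.affineCombination_eq_linear_combination _ _ _ hw₂] at h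
  rw [← tetCoord_sum_smul_tetVertex hc hw₁, h, tetCoord_sum_smul_tetVertex hc hw₂]

theorem affineSpan_tetVertex (hc : c ≠ 0) : affineSpan ℝ (range (tetVertex a b c)) = ⊤ := by
  refine eq_top_iff.mpr fun x _ => ?_
  rw [← sum_tetCoord_smul_tetVertex hc x, ← Finset.affineCombination_eq_linear_combination _ _ _
    (sum_tetCoord x)]
  exact affineCombination_mem_affineSpan (sum_tetCoord x) _

noncomputable def tetBasis (a b : ℤ) (hc : c ≠ 0) : AffineBasis (Fin 4) ℝ (Fin 3 → ℝ) :=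
  ⟨tetVertex a b c, affineIndependent_tetVertex hc, affineSpan_tetVertex hc⟩

@[simp]
theorem coe_tetBasis (hc : c ≠ 0) : ⇑(tetBasis a b hc) = tetVertex a b c := rfl

theorem tetBasis_coord (hc : c ≠ 0) (i : Fin 4) (x : Fin 3 → ℝ) :
    (tetBasis a b hc).coord i x = tetCoord a b c x i := by
  have hx : Finset.univ.affineCombination ℝ (tetBasis a b hc) (tetCoord a b c x) = x := by
    rw [Finset.affineCombination_eq_linear_combination _ _ _ (sum_tetCoord x)]
    exact sum_tetCoord_smul_tetVertex hc x
  nth_rw 1 [← hx]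
  exact (tetBasis a b hc).coord_apply_combination_of_mem (Finset.mem_univ i) (sum_tetCoord x)

theorem tet_eq_convexHull_range (hc : c ≠ 0) :
    Tet a b c = convexHull ℝ (range (tetBasis a b hc)) := by
  rw [Tet, coe_tetBasis]
  congr 1
  ext x
  simp [tetVertex]
  tauto

theorem frontier_tet (hc : c ≠ 0) :
    frontier (Tet a b c) = {x | (∀ i, 0 ≤ tetCoord a b c x i) ∧ ∃ i, tetCoord a b c x i = 0} := by
  simp only [tet_eq_convexHull_range hc, AffineBasis.frontier_convexHull, tetBasis_coord]

theorem tetCoord_intCast (hc : c ≠ 0) (m n k : ℤ) (i : Fin 4) :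
    tetCoord a b c ![(m : ℝ), n, k] i = tetCoordNum a b c m n k i / c := by
  have hc : (c : ℝ) ≠ 0 := by exact_mod_cast hc
  fin_cases i <;> simp [tetCoord, tetCoordNum] <;> field_simp
  ring

theorem mem_frontier_tet_intCast (hc : 0 < c) (m n k : ℤ) :
    ![(m : ℝ), n, k] ∈ frontier (Tet a b c) ↔
      (∀ i, 0 ≤ tetCoordNum a b c m n k i) ∧ ∃ i, tetCoordNum a b c m n k i = 0 := by
  have hc' : (0 : ℝ) < c := by exact_mod_cast hc
  simp only [frontier_tet hc.ne', mem_ofPred_eq, tetCoord_intCast hc.ne', le_div_iff₀ hc', zero_mul,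
    div_eq_zero_iff, hc'.ne', or_false, Int.cast_eq_zero]
  norm_cast

theorem dvd_tetCoordNum {m n k : ℤ} (h : c ∣ k) (i : Fin 4) : c ∣ tetCoordNum a b c m n k i := by
  fin_cases i
  · exact (dvd_mul_right c _).sub (h.mul_left _)
  · exact (dvd_mul_right c _).sub (h.mul_left _)
  · exact (dvd_mul_right c _).sub (h.mul_left _)
  · exact h

theorem tetIsClean_iff (hc : 0 < c) :
    TetIsClean a b c ↔ ∀ m n k : ℤ, (∀ i, 0 ≤ tetCoordNum a b c m n k i) →
      (∃ i, tetCoordNum a b c m n k i = 0) → c ∣ k := by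
  constructor
  · intro h m n k hnonneg hzero
    have hvert := h _ ((mem_frontier_tet_intCast hc m n k).mpr ⟨hnonneg, hzero⟩)
      (isLatticePt_iff.mpr ⟨m, n, k, rfl⟩)
    rcases hvert with h | h | h | h <;> have hk := congrFun h 2 <;>
      simp only [Matrix.cons_val, Int.cast_eq_zero, Int.cast_inj] at hk <;> simp [hk]
  · rintro h x hx hlat
    obtain ⟨m, n, k, rfl⟩ := isLatticePt_iff.mp hlat
    have hdvd := ((mem_frontier_tet_intCast hc m n k).mp hx).elim (h m n k)
    rw [frontier_tet hc.ne'] at hx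
    have hint (i : Fin 4) :
        (tetBasis a b hc.ne').coord i ![(m : ℝ), n, k] ∈ range ((↑) : ℤ → ℝ) := by
      obtain ⟨z, hz⟩ := dvd_tetCoordNum (a := a) (b := b) (m := m) (n := n) hdvd i
      refine ⟨z, ?_⟩
      rw [eq_comm, tetBasis_coord, tetCoord_intCast hc.ne', hz, Int.cast_mul, mul_div_cancel_left₀]
      exact_mod_cast hc.ne'
    obtain ⟨i, hi⟩ := (tetBasis a b hc.ne').exists_eq_of_coord_mem_range_intCast
      (fun i => (tetBasis_coord hc.ne' i _).symm ▸ hx.1 i) hint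
    rw [hi]
    fin_cases i <;> simp [tetVertex]

theorem tetIsClean_of_gcd_eq_one (hc : 0 < c) (ha : Int.gcd a c = 1) (hb : Int.gcd b c = 1)
    (hd : Int.gcd (1 - a - b) c = 1) : TetIsClean a b c := by
  rw [tetIsClean_iff hc]
  rintro m n k - ⟨i, hi⟩
  fin_cases i <;>
    simp only [tetCoordNum, Fin.zero_eta, Fin.mk_one, Fin.reduceFinMk, Matrix.cons_val] at hi
  · exact Int.dvd_of_dvd_mul_right_of_gcd_one ⟨1 - m - n, by linarith⟩ (Int.gcd_comm _ _ ▸ hd)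
  · exact Int.dvd_of_dvd_mul_right_of_gcd_one ⟨m, by linarith⟩ (Int.gcd_comm _ _ ▸ ha)
  · exact Int.dvd_of_dvd_mul_right_of_gcd_one ⟨n, by linarith⟩ (Int.gcd_comm _ _ ▸ hb)
  · exact hi ▸ dvd_zero c

theorem gcd_eq_one_of_tetIsClean (hc : 0 < c) (h : TetIsClean a b c) :
    Int.gcd a c = 1 ∧ Int.gcd b c = 1 ∧ Int.gcd (1 - a - b) c = 1 := by
  rw [tetIsClean_iff hc] at h
  have hface : ∀ m n k : ℤ, 0 < k → k < c → (∀ i, 0 ≤ tetCoordNum a b c m n k i) →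
      (∃ i, tetCoordNum a b c m n k i = 0) → False := fun m n k hk0 hkc hnonneg hzero =>
    hk0.ne' (Int.eq_zero_of_dvd_of_nonneg_of_lt hk0.le hkc (h m n k hnonneg hzero))
  refine ⟨?_, ?_, ?_⟩ <;> by_contra hg
  · obtain ⟨u, v, w, k, hsum, hk0, hkc, hu, hv, hw⟩ :=
      exists_intermediate_point_of_gcd_ne_one (show a + b + (1 - a - b) = 1 by ring) hc hg
    obtain rfl : w = 1 - u - v := by linarith
    refine hface u v k hk0 hkc (fun i => ?_)
      ⟨1, by simp only [tetCoordNum, Matrix.cons_val]; linarith⟩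
    fin_cases i <;>
      simp only [tetCoordNum, Fin.zero_eta, Fin.mk_one, Fin.reduceFinMk, Matrix.cons_val] <;>
      linarith
  · obtain ⟨u, v, w, k, hsum, hk0, hkc, hu, hv, hw⟩ :=
      exists_intermediate_point_of_gcd_ne_one (show b + (1 - a - b) + a = 1 by ring) hc hg
    obtain rfl : v = 1 - u - w := by linarith
    refine hface w u k hk0 hkc (fun i => ?_)
      ⟨2, by simp only [tetCoordNum, Matrix.cons_val]; linarith⟩
    fin_cases i <;>
      simp only [tetCoordNum, Fin.zero_eta, Fin.mk_one, Fin.reduceFinMk, Matrix.cons_val] <;>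
      linarith
  · obtain ⟨u, v, w, k, hsum, hk0, hkc, hu, hv, hw⟩ :=
      exists_intermediate_point_of_gcd_ne_one (show (1 - a - b) + a + b = 1 by ring) hc hg
    obtain rfl : u = 1 - v - w := by linarith
    refine hface v w k hk0 hkc (fun i => ?_)
      ⟨0, by simp only [tetCoordNum, Matrix.cons_val]; linarith⟩
    fin_cases i <;>
      simp only [tetCoordNum, Fin.zero_eta, Fin.mk_one, Fin.reduceFinMk, Matrix.cons_val] <;>
      linarith

end

theorem stmt_9_general (a b c d : ℤ) (hc : 1 ≤ c) (hd : d = (1 - a - b) % c) :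
    TetIsClean a b c ↔ (Int.gcd a c = 1 ∧ Int.gcd b c = 1 ∧ Int.gcd d c = 1) := by
  rw [hd, Int.gcd_emod]
  exact ⟨gcd_eq_one_of_tetIsClean hc, fun ⟨ha, hb, hab⟩ => tetIsClean_of_gcd_eq_one hc ha hb hab⟩

/-- Let `0 ≤ a, b < c`, `c ≥ 1`, and `d = (1 - a - b) mod c`. The tetrahedron `T_{a,b,c}`
is clean if and only if `gcd(a,c) = gcd(b,c) = gcd(d,c) = 1`. -/
theorem stmt_9 (a b c d : ℤ) (ha : 0 ≤ a) (hac : a < c) (hb : 0 ≤ b) (hbc : b < c)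
    (hc : 1 ≤ c) (hd : d = (1 - a - b) % c) :
    TetIsClean a b c ↔ (Int.gcd a c = 1 ∧ Int.gcd b c = 1 ∧ Int.gcd d c = 1) :=
  stmt_9_general a b c d hc hd
end

section
/- Let c > 1 be an integer, let a, b be integers with 0 ≤ a, b < c, let d = (1−a−b) mod c, and suppose T_{a,b,c} is a clean lattice tetrahedron. Then T_{a,b,c} is empty if and only if for every integer k with 1 ≤ k ≤ c−1, ⟨ka/c⟩ + ⟨kb/c⟩ + ⟨kd/c⟩ − k/c = 1, where ⟨x⟩ = x − ⌊x⌋ denotes the fractional part. -/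
/-! A lattice point `(p, q, h)` of `T_{a,b,c}` has barycentric coordinates `wᵢ / c`, where
`w₁ = cp - ah`, `w₂ = cq - bh`, `w₃ = h` and `w₀ = c - w₁ - w₂ - w₃` are nonnegative integers.
Writing `h = c - k`, they satisfy `w₁ ≡ ka`, `w₂ ≡ kb`, `w₀ ≡ kd (mod c)` and `w₀ + w₁ + w₂ = k`,
so for `0 < k < c` a lattice point at height `c - k` exists iff the residues of `ka`, `kb`, `kd`
modulo `c` sum to exactly `k`; the slices at heights `0` and `c` contain only vertices.
The residue sum is `≡ k (mod c)` and lies in `[0, 3c)`, hence is `k`, `k + c` or `k + 2c`, and the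
fractional-part condition says it is `k + c`. The value `k + 2c` is excluded as well: all three
residues are then nonzero, so replacing `k` by `c - k` turns the sum into `3c - (k + 2c) = c - k`. -/

section Geometry

variable {a b c : ℤ}

lemma mem_tet_iff (hc : 0 < c) (x : Fin 3 → ℝ) :
    x ∈ Tet a b c ↔
      0 ≤ (c : ℝ) * x 0 - a * x 2 ∧ 0 ≤ (c : ℝ) * x 1 - b * x 2 ∧ 0 ≤ x 2 ∧
        (c : ℝ) * x 0 + c * x 1 + (1 - a - b) * x 2 ≤ c := by
  have hc' : (0 : ℝ) < c := by exact_mod_cast hc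
  constructor
  · intro hx
    have hconvex : Convex ℝ {y : Fin 3 → ℝ | 0 ≤ (c : ℝ) * y 0 - a * y 2 ∧
        0 ≤ (c : ℝ) * y 1 - b * y 2 ∧ 0 ≤ y 2 ∧
          (c : ℝ) * y 0 + c * y 1 + (1 - a - b) * y 2 ≤ c} := by
      rintro y ⟨hy1, hy2, hy3, hy4⟩ z ⟨hz1, hz2, hz3, hz4⟩ s t hs ht hst
      simp only [Set.mem_ofPred_eq, Pi.add_apply, Pi.smul_apply, smul_eq_mul]
      refine ⟨?_, ?_, ?_, ?_⟩
      · linarith [mul_nonneg hs hy1, mul_nonneg ht hz1]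
      · linarith [mul_nonneg hs hy2, mul_nonneg ht hz2]
      · linarith [mul_nonneg hs hy3, mul_nonneg ht hz3]
      · have hsplit : s * c + t * c = c := by rw [← add_mul, hst, one_mul]
        linarith [mul_le_mul_of_nonneg_left hy4 hs, mul_le_mul_of_nonneg_left hz4 ht]
    refine convexHull_min ?_ hconvex hx
    simp only [Set.insert_subset_iff, Set.singleton_subset_iff, Set.mem_ofPred_eq,
      Matrix.cons_val_zero, Matrix.cons_val_one, Matrix.cons_val, Int.cast_nonneg_iff]
    refine ⟨⟨?_, ?_, ?_, ?_⟩, ⟨?_, ?_, ?_, ?_⟩, ⟨?_, ?_, ?_, ?_⟩, ⟨?_, ?_, ?_, ?_⟩⟩ <;> linarith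
  · rintro ⟨h1, h2, h3, h4⟩
    set w : Fin 4 → ℝ := ![(c - c * x 0 - c * x 1 - (1 - a - b) * x 2) / c,
      (c * x 0 - a * x 2) / c, (c * x 1 - b * x 2) / c, x 2 / c]
    set z : Fin 4 → Fin 3 → ℝ := ![![0,0,0], ![1,0,0], ![0,1,0], ![(a : ℝ), (b : ℝ), (c : ℝ)]]
    have hw0 : ∀ i ∈ Finset.univ, 0 ≤ w i := by
      intro i _
      fin_cases i <;> exact div_nonneg (by linarith) hc'.le
    have hw1 : ∑ i, w i = 1 := by
      simp only [w, Fin.sum_univ_four, Matrix.cons_val_zero, Matrix.cons_val_one, Matrix.cons_val]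
      field_simp
      ring
    have hcenter : Finset.univ.centerMass w z = x := by
      rw [Finset.centerMass_eq_of_sum_1 _ _ hw1]
      funext j
      fin_cases j <;>
        simp only [w, z, Fin.zero_eta, Fin.mk_one, Fin.reduceFinMk, Fin.sum_univ_four,
          Finset.sum_apply, Pi.smul_apply, smul_eq_mul, Matrix.cons_val_zero, Matrix.cons_val_one,
          Matrix.cons_val] <;>
        field_simp <;> ring
    rw [← hcenter]
    exact Finset.centerMass_mem_convexHull _ hw0 (by rw [hw1]; norm_num)
      (fun i _ => by fin_cases i <;> simp [z])

lemma IsLatticePt.exists_eq {x : Fin 3 → ℝ} (hx : IsLatticePt x) :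
    ∃ p q h : ℤ, x = ![(p : ℝ), q, h] := by
  obtain ⟨⟨p, hp⟩, ⟨q, hq⟩, ⟨h, hh⟩⟩ := And.intro (hx 0) (And.intro (hx 1) (hx 2))
  exact ⟨p, q, h, by funext i; fin_cases i <;> simp [hp, hq, hh]⟩

lemma intPt_mem_tet_iff (hc : 0 < c) (p q h : ℤ) :
    ![(p : ℝ), q, h] ∈ Tet a b c ↔
      0 ≤ c * p - a * h ∧ 0 ≤ c * q - b * h ∧ 0 ≤ h ∧ c * p + c * q + (1 - a - b) * h ≤ c := by
  rw [mem_tet_iff hc]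
  simp only [Matrix.cons_val_zero, Matrix.cons_val_one, Matrix.cons_val_two, Matrix.head_cons,
    Matrix.tail_cons]
  norm_cast

lemma intPt_mem_tet_eq_vertex (hc : 0 < c) {p q h : ℤ} (hx : ![(p : ℝ), q, h] ∈ Tet a b c)
    (hh : h ≤ 0 ∨ c ≤ h) :
    ![(p : ℝ), q, h] = ![0, 0, 0] ∨ ![(p : ℝ), q, h] = ![1, 0, 0] ∨
      ![(p : ℝ), q, h] = ![0, 1, 0] ∨ ![(p : ℝ), q, h] = ![(a : ℝ), (b : ℝ), (c : ℝ)] := by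
  obtain ⟨h1, h2, h3, h4⟩ := (intPt_mem_tet_iff hc p q h).1 hx
  have hhc : h ≤ c := by linarith
  obtain rfl | rfl : h = 0 ∨ h = c := by omega
  · have : 0 ≤ p := by nlinarith
    have : 0 ≤ q := by nlinarith
    have : p + q ≤ 1 := by nlinarith
    obtain ⟨rfl, rfl⟩ | ⟨rfl, rfl⟩ | ⟨rfl, rfl⟩ : (p = 0 ∧ q = 0) ∨ (p = 1 ∧ q = 0) ∨
        (p = 0 ∧ q = 1) := by omega
    all_goals simp
  · have : a ≤ p := by nlinarith
    have : b ≤ q := by nlinarith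
    have : p + q ≤ a + b := by nlinarith
    obtain ⟨rfl, rfl⟩ : p = a ∧ q = b := by omega
    simp

lemma tetIsEmpty_iff (hc : 0 < c) :
    TetIsEmpty a b c ↔ ∀ h : ℤ, 0 < h → h < c → ∀ p q : ℤ, ![(p : ℝ), q, h] ∉ Tet a b c := by
  constructor
  · intro hempty h hh0 hhc p q hx
    have hlat : IsLatticePt ![(p : ℝ), q, h] := fun i => by
      fin_cases i
      exacts [⟨p, rfl⟩, ⟨q, rfl⟩, ⟨h, rfl⟩]
    rcases hempty _ hx hlat with hv | hv | hv | hv <;>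
      · have := congrFun hv 2
        simp only [Matrix.cons_val, Int.cast_eq_zero, Int.cast_inj] at this
        omega
  · intro hnone x hx hlat
    obtain ⟨p, q, h, rfl⟩ := hlat.exists_eq
    by_contra hv
    refine hnone h ?_ ?_ p q hx <;>
      · by_contra
        exact hv (intPt_mem_tet_eq_vertex hc hx (by omega))

end Geometry

def residueSum (a b d c k : ℤ) : ℤ := k * a % c + k * b % c + k * d % c

section Residues

variable {a b c d : ℤ}

lemma emod_eq_of_modEq {x w : ℤ} (h : x ≡ w [ZMOD c]) (hw0 : 0 ≤ w) (hwc : w < c) : x % c = w :=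
  Eq.trans h (Int.emod_eq_of_lt hw0 hwc)

lemma residueSum_modEq (k : ℤ) (hd : d = (1 - a - b) % c) :
    residueSum a b d c k ≡ k [ZMOD c] := by
  have hd' : d ≡ 1 - a - b [ZMOD c] := by rw [hd]; exact Int.mod_modEq _ _
  calc residueSum a b d c k
      ≡ k * a + k * b + k * d [ZMOD c] :=
        ((Int.mod_modEq _ _).add (Int.mod_modEq _ _)).add (Int.mod_modEq _ _)
    _ ≡ k * a + k * b + k * (1 - a - b) [ZMOD c] := (hd'.mul_left k).add_left _
    _ = k := by ring

lemma residueSum_nonneg (hc : 0 < c) (k : ℤ) : 0 ≤ residueSum a b d c k := by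
  unfold residueSum
  have := Int.emod_nonneg (k * a) hc.ne'
  have := Int.emod_nonneg (k * b) hc.ne'
  have := Int.emod_nonneg (k * d) hc.ne'
  omega

lemma residueSum_lt (hc : 0 < c) (k : ℤ) : residueSum a b d c k < 3 * c := by
  unfold residueSum
  have := Int.emod_lt_of_pos (k * a) hc
  have := Int.emod_lt_of_pos (k * b) hc
  have := Int.emod_lt_of_pos (k * d) hc
  omega

lemma residueSum_trichotomy (hc : 0 < c) (hd : d = (1 - a - b) % c) {k : ℤ} (hk0 : 0 ≤ k)
    (hkc : k < c) :
    residueSum a b d c k = k ∨ residueSum a b d c k = k + c ∨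
      residueSum a b d c k = k + 2 * c := by
  set s := residueSum a b d c k
  have hmod : s % c = k := emod_eq_of_modEq (residueSum_modEq k hd) hk0 hkc
  have hq0 : 0 ≤ s / c := Int.ediv_nonneg (residueSum_nonneg hc k) hc.le
  have hq3 : s / c < 3 := Int.ediv_lt_of_lt_mul hc (residueSum_lt hc k)
  have hs := Int.mul_ediv_add_emod s c
  interval_cases h : s / c <;> omega

lemma sub_mul_emod_of_not_dvd (hc : 0 < c) {k x : ℤ} (h : ¬ c ∣ k * x) :
    (c - k) * x % c = c - k * x % c := by
  rw [show (c - k) * x = -(k * x) + x * c by ring, Int.add_mul_emod_self_right,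
    Int.neg_emod, if_neg h, Int.natAbs_of_nonneg hc.le]

lemma residueSum_sub_of_eq_add_two_mul (hc : 0 < c) {k : ℤ} (hk : 0 ≤ k)
    (h : residueSum a b d c k = k + 2 * c) : residueSum a b d c (c - k) = c - k := by
  unfold residueSum at *
  have hA := Int.emod_lt_of_pos (k * a) hc
  have hB := Int.emod_lt_of_pos (k * b) hc
  have hD := Int.emod_lt_of_pos (k * d) hc
  have not_dvd : ∀ x, 0 < k * x % c → ¬ c ∣ k * x := fun x hx hdvd => by
    rw [Int.emod_eq_zero_of_dvd hdvd] at hx; exact hx.false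
  rw [sub_mul_emod_of_not_dvd hc (not_dvd a (by omega)),
    sub_mul_emod_of_not_dvd hc (not_dvd b (by omega)),
    sub_mul_emod_of_not_dvd hc (not_dvd d (by omega))]
  omega

lemma fract_intCast_div (m : ℤ) (hc : 0 < c) :
    Int.fract ((m : ℝ) / c) = ((m % c : ℤ) : ℝ) / c := by
  lift c to ℕ using hc.le
  simp only [Int.cast_natCast]
  exact Int.fract_div_intCast_eq_div_intCast_mod

lemma fract_sum_sub_eq_one_iff (hc : 0 < c) (k : ℤ) :
    Int.fract ((k * a : ℤ) / (c : ℝ)) + Int.fract ((k * b : ℤ) / (c : ℝ)) +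
        Int.fract ((k * d : ℤ) / (c : ℝ)) - (k : ℝ) / (c : ℝ) = 1 ↔
      residueSum a b d c k = k + c := by
  have hc' : (0 : ℝ) < c := by exact_mod_cast hc
  simp only [fract_intCast_div _ hc, residueSum, ← add_div, ← sub_div, div_eq_one_iff_eq hc'.ne']
  norm_cast
  omega

end Residues

lemma exists_intPt_mem_tet_iff {a b c d : ℤ} (hc : 0 < c) (hd : d = (1 - a - b) % c) {k : ℤ}
    (hkc : k < c) :
    (∃ p q : ℤ, ![(p : ℝ), q, ((c - k : ℤ) : ℝ)] ∈ Tet a b c) ↔ residueSum a b d c k = k := by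
  simp only [intPt_mem_tet_iff hc]
  constructor
  · rintro ⟨p, q, h1, h2, -, h4⟩
    have hdk : k * d ≡ k * (1 - a - b) [ZMOD c] := by rw [hd]; exact (Int.mod_modEq _ _).mul_left k
    have hA := emod_eq_of_modEq (x := k * a) (w := c * p - a * (c - k))
      (Int.modEq_iff_dvd.2 ⟨p - a, by ring⟩) h1 (by linarith)
    have hB := emod_eq_of_modEq (x := k * b) (w := c * q - b * (c - k))
      (Int.modEq_iff_dvd.2 ⟨q - b, by ring⟩) h2 (by linarith)
    have hD := emod_eq_of_modEq (w := c - c * p - c * q - (1 - a - b) * (c - k))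
      (hdk.trans (Int.modEq_iff_dvd.2 ⟨a + b - p - q, by ring⟩)) (by linarith) (by linarith)
    rw [residueSum, hA, hB, hD]
    ring
  · intro hsum
    have hA := Int.emod_def (k * a) c
    have hB := Int.emod_def (k * b) c
    have hD0 := Int.emod_nonneg (k * d) hc.ne'
    have hA0 := Int.emod_nonneg (k * a) hc.ne'
    have hB0 := Int.emod_nonneg (k * b) hc.ne'
    unfold residueSum at hsum
    exact ⟨a - k * a / c, b - k * b / c, by linarith, by linarith, by omega, by linarith⟩

theorem stmt_10_general (a b c d : ℤ) (hc : 1 < c) (hd : d = (1 - a - b) % c) :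
    TetIsEmpty a b c ↔
      ∀ k : ℤ, 1 ≤ k → k ≤ c - 1 →
        Int.fract ((k * a : ℤ) / (c : ℝ)) + Int.fract ((k * b : ℤ) / (c : ℝ)) +
            Int.fract ((k * d : ℤ) / (c : ℝ)) - (k : ℝ) / (c : ℝ) = 1 := by
  have hc0 : 0 < c := by omega
  simp only [fract_sum_sub_eq_one_iff hc0, tetIsEmpty_iff hc0]
  constructor
  · intro hnone k hk1 hk2
    have no_fixed : ∀ j, 0 < j → j < c → residueSum a b d c j ≠ j := fun j hj0 hjc hj => by
      obtain ⟨p, q, hx⟩ := (exists_intPt_mem_tet_iff hc0 hd hjc).2 hj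
      exact hnone (c - j) (by omega) (by omega) p q hx
    rcases residueSum_trichotomy hc0 hd (by omega) (by omega : k < c) with h | h | h
    · exact absurd h (no_fixed k (by omega) (by omega))
    · exact h
    · exact absurd (residueSum_sub_of_eq_add_two_mul hc0 (by omega) h)
        (no_fixed (c - k) (by omega) (by omega))
  · intro hcond h hh0 hhc p q hx
    have hfixed := (exists_intPt_mem_tet_iff hc0 hd (k := c - h) (by omega)).1
      ⟨p, q, by rwa [sub_sub_cancel]⟩
    have := hcond (c - h) (by omega) (by omega)
    omega

/-- Let `c > 1`, `0 ≤ a, b < c`, `d = (1 - a - b) mod c`, and suppose `T_{a,b,c}` is a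
clean lattice tetrahedron. Then `T_{a,b,c}` is empty if and only if
`⟨ka/c⟩ + ⟨kb/c⟩ + ⟨kd/c⟩ - k/c = 1` for every integer `k` with `1 ≤ k ≤ c - 1`, where
`⟨x⟩` denotes the fractional part. -/
theorem stmt_10 (a b c d : ℤ) (hc : 1 < c) (ha : 0 ≤ a) (hac : a < c) (hb : 0 ≤ b)
    (hbc : b < c) (hd : d = (1 - a - b) % c) (hclean : TetIsClean a b c) :
    TetIsEmpty a b c ↔
      ∀ k : ℤ, 1 ≤ k → k ≤ c - 1 →
        Int.fract ((k * a : ℤ) / (c : ℝ)) + Int.fract ((k * b : ℤ) / (c : ℝ)) +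
            Int.fract ((k * d : ℤ) / (c : ℝ)) - (k : ℝ) / (c : ℝ) = 1 :=
  stmt_10_general a b c d hc hd
end
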